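/- Theorem (strong convexity of the dilatable global entropy on chains of scaled extensions of simplexes). In the simplex chain-of-scaled-extensions setup, choose the coefficients recursively as α_n := 1 and α_k := 1 + ‖ Σ_{p=k}^{n−1} α_{p+1}·‖a_p‖₀·a_{p,k} ‖_∞ for k = n−1,…,1. Then for every x = (x_1,…,x_n) ∈ (relint Δ^{s_1}) ◁^{h_1} ⋯ ◁^{h_{n−1}} (relint Δ^{s_n}) and every m ∈ ℝ^{s_1+⋯+s_n}: m^⊤ ∇²φ̃(x) m ≥ ‖m‖₂² and m^⊤ ∇²φ̃(x) m ≥ (1/M_X)·‖m‖₁², where M_X := max_{x∈X} ‖x‖₁. That is, the dilatable global entropy φ̃ is 1-strongly convex with respect to the Euclidean norm and (1/M_X)-strongly convex with respect to the ℓ₁ norm on relint X. -/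

import Mathlib

/-!
At a point `x` of the relative interior the Hessian quadratic form of `φ̃` is
`∑ₖ αₖ ∑ᵢ mₖᵢ² / xₖᵢ - ∑ₖ αₖ hₖ(m)² / hₖ(x)`. Cauchy–Schwarz bounds each subtracted term by
`αₖ ∑_{q<k} ∑ᵢ a_{k,q,i} m_qᵢ² / x_qᵢ`; after exchanging the sums, the recursive choice of the
`αₖ` makes the total weight of `m_qᵢ² / x_qᵢ` so subtracted at most `α_q - 1`. Hence the form
dominates `∑ m² / x`, which is at least `‖m‖₂²` because `x ≤ 1` coordinatewise, and at least
`‖m‖₁² / M_X` by Cauchy–Schwarz again.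
-/

open Finset

section Calculus

open Real

variable {E : Type*} [NormedAddCommGroup E] [NormedSpace ℝ E]

theorem contDiffAt_mul_log_comp {N : WithTop ℕ∞} (L : E →L[ℝ] ℝ) {x : E} (hx : L x ≠ 0) :
    ContDiffAt ℝ N (fun y => L y * log (L y)) x :=
  L.contDiff.contDiffAt.mul ((contDiffAt_log.2 hx).comp x L.contDiff.contDiffAt)

theorem iteratedFDeriv_two_mul_log_comp (L : E →L[ℝ] ℝ) {x : E} (hx : L x ≠ 0) (m m' : E) :
    iteratedFDeriv ℝ 2 (fun y => L y * log (L y)) x ![m, m'] = L m * L m' / L x := by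
  have hopen : IsOpen ({0}ᶜ : Set ℝ) := isOpen_compl_singleton
  have hsmooth : ContDiffOn ℝ 2 (fun t : ℝ => t * log t) {0}ᶜ :=
    contDiffOn_id.mul contDiffOn_log
  have hcomp := L.iteratedFDerivWithin_comp_right hsmooth
    hopen.uniqueDiffOn (hopen.preimage L.continuous).uniqueDiffOn hx le_rfl
  rw [iteratedFDerivWithin_of_isOpen 2 (hopen.preimage L.continuous) hx,
    iteratedFDerivWithin_of_isOpen 2 hopen hx] at hcomp
  change iteratedFDeriv ℝ 2 ((fun t : ℝ => t * log t) ∘ L) x ![m, m'] = _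
  rw [hcomp, ContinuousMultilinearMap.compContinuousLinearMap_apply,
    iteratedFDeriv_apply_eq_iteratedDeriv_mul_prod, iteratedDeriv_eq_iterate, deriv2_mul_log]
  simp [Fin.prod_univ_two, div_eq_mul_inv]

theorem contDiffAt_sum_mul_log {N : WithTop ℕ∞} {ι : Type*} (t : Finset ι) (c : ι → ℝ)
    (L : ι → E →L[ℝ] ℝ) {x : E} (hx : ∀ j ∈ t, L j x ≠ 0) :
    ContDiffAt ℝ N (fun y => ∑ j ∈ t, c j * (L j y * log (L j y))) x :=
  ContDiffAt.sum fun j hj => contDiffAt_const.mul (contDiffAt_mul_log_comp (L j) (hx j hj))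

theorem iteratedFDeriv_two_sum_mul_log {ι : Type*} (t : Finset ι) (c : ι → ℝ)
    (L : ι → E →L[ℝ] ℝ) {x : E} (hx : ∀ j ∈ t, L j x ≠ 0) (m m' : E) :
    iteratedFDeriv ℝ 2 (fun y => ∑ j ∈ t, c j * (L j y * log (L j y))) x ![m, m'] =
      ∑ j ∈ t, c j * (L j m * L j m' / L j x) := by
  rw [iteratedFDeriv_fun_sum_apply fun j hj =>
      contDiffAt_const.mul (contDiffAt_mul_log_comp (L j) (hx j hj))]
  simp only [_root_.sum_apply]
  refine sum_congr rfl fun j hj => ?_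
  have hsmul := iteratedFDeriv_const_smul_apply' (a := c j)
    (contDiffAt_mul_log_comp (N := 2) (L j) (hx j hj))
  simp only [smul_eq_mul] at hsmul
  rw [hsmul, smul_apply, iteratedFDeriv_two_mul_log_comp (L j) (hx j hj), smul_eq_mul]

theorem iteratedFDeriv_two_clm_add_const (T : E →L[ℝ] ℝ) (κ : ℝ) (x m m' : E) :
    iteratedFDeriv ℝ 2 (fun y => T y + κ) x ![m, m'] = 0 := by
  have hT : fderiv ℝ (fun y => T y + κ) = fun _ => T :=
    funext fun y => by rw [fderiv_add_const, T.fderiv]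
  simp [iteratedFDeriv_two_apply, hT]

end Calculus

section Simplex

open Filter Topology

theorem eventually_lineMap_mem_of_mem_intrinsicInterior {V : Type*} [NormedAddCommGroup V]
    [NormedSpace ℝ V] {S : Set V} {x y : V} (hx : x ∈ intrinsicInterior ℝ S) (hy : y ∈ S) :
    ∀ᶠ t in 𝓝 (0 : ℝ), AffineMap.lineMap x y t ∈ S := by
  obtain ⟨u, hu, rfl⟩ := mem_intrinsicInterior.1 hx
  let line : ℝ → affineSpan ℝ S := fun t =>
    ⟨AffineMap.lineMap (u : V) y t, AffineMap.lineMap_mem t u.2 (subset_affineSpan ℝ S hy)⟩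
  have hline : Continuous line := AffineMap.lineMap_continuous.subtype_mk _
  have hline0 : line 0 = u := Subtype.ext (AffineMap.lineMap_apply_zero _ _)
  have := hline.continuousAt.preimage_mem_nhds (hline0 ▸ isOpen_interior.mem_nhds hu)
  exact mem_of_superset this fun t ht => interior_subset (s := Subtype.val ⁻¹' S) ht

theorem pos_of_mem_intrinsicInterior_stdSimplex {ι : Type*} [Fintype ι] {y : ι → ℝ}
    (hy : y ∈ intrinsicInterior ℝ (stdSimplex ℝ ι)) (i : ι) : 0 < y i := by
  classical
  refine ((intrinsicInterior_subset hy).1 i).lt_of_ne' fun hyi => ?_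
  -- moving from `y` away from the vertex `i` would make the `i`-th coordinate negative
  have hline := eventually_lineMap_mem_of_mem_intrinsicInterior hy (single_mem_stdSimplex ℝ i)
  obtain ⟨t, ht, htneg⟩ := ((hline.filter_mono nhdsWithin_le_nhds).and
    (self_mem_nhdsWithin : ∀ᶠ t in 𝓝[<] (0 : ℝ), t < 0)).exists
  exact htneg.not_ge (by simpa [AffineMap.lineMap_apply, hyi] using ht.1 i)

end Simplex

theorem sq_sum_mul_div_sum_mul_le {ι : Type*} (t : Finset ι) {A x : ι → ℝ} (m : ι → ℝ)
    (hA : ∀ j ∈ t, 0 ≤ A j) (hx : ∀ j ∈ t, 0 < x j) :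
    (∑ j ∈ t, A j * m j) ^ 2 / ∑ j ∈ t, A j * x j ≤ ∑ j ∈ t, A j * (m j ^ 2 / x j) := by
  have hterm : ∀ j ∈ t, 0 ≤ A j * (m j ^ 2 / x j) :=
    fun j hj => mul_nonneg (hA j hj) (div_nonneg (sq_nonneg _) (hx j hj).le)
  refine div_le_of_le_mul₀ (sum_nonneg fun j hj => mul_nonneg (hA j hj) (hx j hj).le)
    (sum_nonneg hterm) (sum_sq_le_sum_mul_sum_of_sq_le_mul t hterm
      (fun j hj => mul_nonneg (hA j hj) (hx j hj).le) fun j hj => le_of_eq ?_)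
  field_simp [(hx j hj).ne']

section Chain

variable {n : ℕ} {s : Fin n → ℕ}

abbrev BlockVec (s : Fin n → ℕ) := (k : Fin n) → Fin (s k) → ℝ

/-- `x ∈ S₀ ◁^{h₁} S₁ ◁ ⋯ ◁^{hₙ₋₁} Sₙ₋₁`, where the scale of block `k` at `x` is
given as the number `h k`. -/
def MemScaledChain (S : (k : Fin n) → Set (Fin (s k) → ℝ)) (h : Fin n → ℝ) (x : BlockVec s) :
    Prop :=
  ∀ k : Fin n, (k.val = 0 → x k ∈ S k) ∧ (k.val ≠ 0 → ∃ v ∈ S k, x k = h k • v)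

namespace MemScaledChain

variable {S T : (k : Fin n) → Set (Fin (s k) → ℝ)} {h : Fin n → ℝ} {x : BlockVec s}

theorem mono (hx : MemScaledChain S h x) (hST : ∀ k, S k ⊆ T k) : MemScaledChain T h x :=
  fun k => ⟨fun hk => hST k ((hx k).1 hk),
    fun hk => (hx k).2 hk |>.imp fun _ hv => ⟨hST k hv.1, hv.2⟩⟩

theorem pos (hx : MemScaledChain S h x) (hS : ∀ k, ∀ v ∈ S k, ∀ i, 0 < v i)
    (hh : ∀ k : Fin n, k.val ≠ 0 → 0 < h k) (k : Fin n) (i : Fin (s k)) : 0 < x k i := by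
  by_cases hk : k.val = 0
  · exact hS k _ ((hx k).1 hk) i
  · obtain ⟨v, hv, hxv⟩ := (hx k).2 hk
    rw [hxv]
    exact mul_pos (hh k hk) (hS k v hv i)

theorem le_one (hx : MemScaledChain S h x) (hS : ∀ k, ∀ v ∈ S k, ∀ i, v i ≤ 1)
    (hh : ∀ k : Fin n, k.val ≠ 0 → 0 ≤ h k ∧ h k ≤ 1) (k : Fin n) (i : Fin (s k)) :
    x k i ≤ 1 := by
  by_cases hk : k.val = 0
  · exact hS k _ ((hx k).1 hk) i
  · obtain ⟨v, hv, hxv⟩ := (hx k).2 hk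
    rw [hxv, Pi.smul_apply, smul_eq_mul]
    exact (mul_le_of_le_one_right (hh k hk).1 (hS k v hv i)).trans (hh k hk).2

end MemScaledChain

noncomputable def blockCoord (k : Fin n) (i : Fin (s k)) : BlockVec s →L[ℝ] ℝ :=
  (ContinuousLinearMap.proj (R := ℝ) (φ := fun _ : Fin (s k) => ℝ) i).comp
    (ContinuousLinearMap.proj (R := ℝ) (φ := fun k => Fin (s k) → ℝ) k)

@[simp] theorem blockCoord_apply (k : Fin n) (i : Fin (s k)) (y : BlockVec s) :
    blockCoord k i y = y k i := rfl

/-- The scale `h_{k-1}` of block `k`, linear in the blocks `q < k`. -/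
noncomputable def chainScale (a : (k : Fin n) → (q : Fin n) → Fin (s q) → ℝ) (k : Fin n) :
    BlockVec s →L[ℝ] ℝ :=
  ∑ q ∈ univ.filter (· < k), ∑ i, a k q i • blockCoord q i

@[simp] theorem chainScale_apply (a : (k : Fin n) → (q : Fin n) → Fin (s q) → ℝ) (k : Fin n)
    (y : BlockVec s) : chainScale a k y = ∑ q ∈ univ.filter (· < k), ∑ i, a k q i * y q i := by
  simp [chainScale]

/-- `‖a_p‖₀`. -/
noncomputable def coeffL0Norm (a : (k : Fin n) → (q : Fin n) → Fin (s q) → ℝ) (p : Fin n) : ℕ :=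
  ∑ q ∈ univ.filter (fun q => q < p), (univ.filter (fun i : Fin (s q) => a p q i ≠ 0)).card

noncomputable def dilatableEntropy (hn : 0 < n)
    (a : (k : Fin n) → (q : Fin n) → Fin (s q) → ℝ) (α : Fin n → ℝ) (y : BlockVec s) : ℝ :=
  (∑ k, α k * ∑ i, y k i * Real.log (y k i))
    - (∑ k ∈ univ.filter (fun k : Fin n => k.val ≠ 0),
        α k * (chainScale a k y * Real.log (chainScale a k y)))
    + α ⟨0, hn⟩ * Real.log (s ⟨0, hn⟩)
    + ∑ k ∈ univ.filter (fun k : Fin n => k.val ≠ 0), α k * (chainScale a k y * Real.log (s k))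

variable {a : (k : Fin n) → (q : Fin n) → Fin (s q) → ℝ}

theorem iteratedFDeriv_two_dilatableEntropy (hn : 0 < n) (α : Fin n → ℝ) {x : BlockVec s}
    (hx : ∀ k i, x k i ≠ 0) (hscale : ∀ k : Fin n, k.val ≠ 0 → chainScale a k x ≠ 0)
    (m m' : BlockVec s) :
    iteratedFDeriv ℝ 2 (dilatableEntropy hn a α) x ![m, m'] =
      (∑ k, α k * ∑ i, m k i * m' k i / x k i)
      - ∑ k ∈ univ.filter (fun k : Fin n => k.val ≠ 0),
          α k * (chainScale a k m * chainScale a k m' / chainScale a k x) := by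
  set F := univ.filter (fun k : Fin n => k.val ≠ 0)
  have hF : ∀ k ∈ F, chainScale a k x ≠ 0 := fun k hk => hscale k (mem_filter.1 hk).2
  have hsplit : dilatableEntropy hn a α = fun y =>
      ((∑ p : Σ k, Fin (s k),
          α p.1 * (blockCoord p.1 p.2 y * Real.log (blockCoord p.1 p.2 y)))
        - ∑ k ∈ F, α k * (chainScale a k y * Real.log (chainScale a k y)))
      + ((∑ k ∈ F, (α k * Real.log (s k)) • chainScale a k) y
        + α ⟨0, hn⟩ * Real.log (s ⟨0, hn⟩)) := by
    funext y
    have hlin : ∀ k, α k * Real.log (s k) * chainScale a k y =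
        α k * (chainScale a k y * Real.log (s k)) := fun k => by ring
    simp only [dilatableEntropy, hlin, blockCoord_apply, Fintype.sum_sigma, mul_sum,
      _root_.sum_apply, smul_apply, smul_eq_mul]
    ring
  have hentropy := contDiffAt_sum_mul_log (N := 2) univ (fun p : Σ k, Fin (s k) => α p.1)
    (fun p => blockCoord p.1 p.2) (x := x) fun p _ => hx p.1 p.2
  have hscaled := contDiffAt_sum_mul_log (N := 2) F α (chainScale a) hF
  rw [hsplit, fun_iteratedFDeriv_add_apply (hentropy.sub hscaled) (by fun_prop),
    fun_iteratedFDeriv_sub_apply hentropy hscaled, add_apply, sub_apply,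
    iteratedFDeriv_two_sum_mul_log _ _ _ hF,
    iteratedFDeriv_two_sum_mul_log _ _ _ fun p _ => hx p.1 p.2, iteratedFDeriv_two_clm_add_const]
  simp only [blockCoord_apply, Fintype.sum_sigma, mul_sum, add_zero]

theorem chainScale_sq_div_le {k : Fin n} (ha : ∀ q < k, ∀ i, 0 ≤ a k q i) {x : BlockVec s}
    (hx : ∀ q i, 0 < x q i) (m : BlockVec s) :
    chainScale a k m ^ 2 / chainScale a k x ≤
      ∑ q ∈ univ.filter (· < k), ∑ i, a k q i * (m q i ^ 2 / x q i) := by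
  simp only [chainScale_apply, sum_sigma']
  exact sq_sum_mul_div_sum_mul_le _ _ (fun p hp => ha _ (by simpa using hp) _)
    fun p _ => hx _ _

theorem sum_mul_chainScale_eq (α : Fin n → ℝ) (w : BlockVec s) :
    ∑ k, α k * chainScale a k w =
      ∑ q, ∑ i, (∑ k ∈ univ.filter (q < ·), α k * a k q i) * w q i := by
  calc ∑ k, α k * chainScale a k w
      = ∑ k, ∑ q ∈ univ.filter (· < k), ∑ i, α k * (a k q i * w q i) := by
        simp only [chainScale_apply, mul_sum]
    _ = ∑ q, ∑ k ∈ univ.filter (q < ·), ∑ i, α k * (a k q i * w q i) :=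
        sum_comm' fun k q => by simp
    _ = ∑ q, ∑ i, (∑ k ∈ univ.filter (q < ·), α k * a k q i) * w q i := by
        simp only [sum_mul, mul_assoc]
        exact sum_congr rfl fun q _ => sum_comm

theorem mul_le_mul_coeffL0Norm {α : Fin n → ℝ} {p q : Fin n} {i : Fin (s q)} (hα : 0 ≤ α p)
    (hqp : q < p) (ha : 0 ≤ a p q i) : α p * a p q i ≤ α p * coeffL0Norm a p * a p q i := by
  rcases ha.eq_or_lt with h | h
  · simp [← h]
  have hmem : i ∈ univ.filter (fun i => a p q i ≠ 0) := by simp [h.ne']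
  have hcard : 1 ≤ coeffL0Norm a p :=
    (card_pos.2 ⟨i, hmem⟩).trans_le
      (single_le_sum (f := fun q => (univ.filter (fun i : Fin (s q) => a p q i ≠ 0)).card)
        (fun _ _ => Nat.zero_le _) (by simpa using hqp))
  gcongr
  exact le_mul_of_one_le_right hα (by exact_mod_cast hcard)

theorem sum_mul_le_of_abs_sum_mul_coeffL0Norm_le {α : Fin n → ℝ} (hα : ∀ k, 0 ≤ α k)
    (ha : ∀ k q, q < k → ∀ i, 0 ≤ a k q i)
    (hbound : ∀ q i, |∑ p ∈ univ.filter (q < ·), α p * coeffL0Norm a p * a p q i| ≤ α q - 1)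
    (q : Fin n) (i : Fin (s q)) : ∑ p ∈ univ.filter (q < ·), α p * a p q i ≤ α q - 1 :=
  calc ∑ p ∈ univ.filter (q < ·), α p * a p q i
      ≤ ∑ p ∈ univ.filter (q < ·), α p * coeffL0Norm a p * a p q i :=
        sum_le_sum fun p hp =>
          mul_le_mul_coeffL0Norm (hα p) (mem_filter.1 hp).2 (ha p q (mem_filter.1 hp).2 i)
    _ ≤ α q - 1 := (le_abs_self _).trans (hbound q i)

theorem sum_mul_chainScale_sq_div_le {α : Fin n → ℝ} (hα : ∀ k, 0 ≤ α k)
    (ha : ∀ k q, q < k → ∀ i, 0 ≤ a k q i)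
    (hcoef : ∀ q i, ∑ p ∈ univ.filter (q < ·), α p * a p q i ≤ α q - 1)
    {x : BlockVec s} (hx : ∀ k i, 0 < x k i) (F : Finset (Fin n)) (m : BlockVec s) :
    ∑ k ∈ F, α k * (chainScale a k m * chainScale a k m / chainScale a k x) ≤
      ∑ q, ∑ i, (α q - 1) * (m q i ^ 2 / x q i) := by
  set w : BlockVec s := fun q i => m q i ^ 2 / x q i
  have hw : ∀ q i, 0 ≤ w q i := fun q i => div_nonneg (sq_nonneg _) (hx q i).le
  calc ∑ k ∈ F, α k * (chainScale a k m * chainScale a k m / chainScale a k x)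
      ≤ ∑ k ∈ F, α k * chainScale a k w := by
        refine sum_le_sum fun k _ => mul_le_mul_of_nonneg_left ?_ (hα k)
        rw [← sq]
        exact (chainScale_sq_div_le (ha k) hx m).trans_eq (chainScale_apply a k w).symm
    _ ≤ ∑ k, α k * chainScale a k w := by
        refine sum_le_sum_of_subset_of_nonneg (subset_univ F) fun k _ _ => ?_
        refine mul_nonneg (hα k) ?_
        rw [chainScale_apply]
        exact sum_nonneg fun q hq => sum_nonneg fun i _ =>
          mul_nonneg (ha k q (mem_filter.1 hq).2 i) (hw q i)
    _ = ∑ q, ∑ i, (∑ p ∈ univ.filter (q < ·), α p * a p q i) * w q i :=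
        sum_mul_chainScale_eq α w
    _ ≤ ∑ q, ∑ i, (α q - 1) * w q i :=
        sum_le_sum fun q _ => sum_le_sum fun i _ =>
          mul_le_mul_of_nonneg_right (hcoef q i) (hw q i)

theorem sum_sq_div_le_iteratedFDeriv_two_dilatableEntropy (hn : 0 < n) {α : Fin n → ℝ}
    (hα : ∀ k, 0 ≤ α k) (ha : ∀ k q, q < k → ∀ i, 0 ≤ a k q i)
    (hcoef : ∀ q i, ∑ p ∈ univ.filter (q < ·), α p * a p q i ≤ α q - 1)
    {x : BlockVec s} (hx : ∀ k i, 0 < x k i)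
    (hscale : ∀ k : Fin n, k.val ≠ 0 → 0 < chainScale a k x) (m : BlockVec s) :
    ∑ k, ∑ i, m k i ^ 2 / x k i ≤ iteratedFDeriv ℝ 2 (dilatableEntropy hn a α) x ![m, m] := by
  rw [iteratedFDeriv_two_dilatableEntropy hn α (fun k i => (hx k i).ne')
    fun k hk => (hscale k hk).ne']
  have hscaled := sum_mul_chainScale_sq_div_le hα ha hcoef hx
    (univ.filter fun k : Fin n => k.val ≠ 0) m
  have hsplit : ∑ k, α k * ∑ i, m k i * m k i / x k i =
      ∑ k, ∑ i, m k i ^ 2 / x k i + ∑ q, ∑ i, (α q - 1) * (m q i ^ 2 / x q i) := by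
    simp only [mul_sum, ← sum_add_distrib]
    exact sum_congr rfl fun k _ => sum_congr rfl fun i _ => by ring
  linarith

theorem sum_sq_le_sum_sq_div {x : BlockVec s} (hx : ∀ k i, 0 < x k i) (hx1 : ∀ k i, x k i ≤ 1)
    (m : BlockVec s) : ∑ k, ∑ i, m k i ^ 2 ≤ ∑ k, ∑ i, m k i ^ 2 / x k i :=
  sum_le_sum fun k _ => sum_le_sum fun i _ =>
    le_div_self (sq_nonneg _) (hx k i) (hx1 k i)

theorem one_div_mul_sq_sum_abs_le {x : BlockVec s} (hx : ∀ k i, 0 < x k i) {M : ℝ}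
    (hM : ∑ k, ∑ i, |x k i| ≤ M) (m : BlockVec s) :
    1 / M * (∑ k, ∑ i, |m k i|) ^ 2 ≤ ∑ k, ∑ i, m k i ^ 2 / x k i := by
  have hw : 0 ≤ ∑ k, ∑ i, m k i ^ 2 / x k i :=
    sum_nonneg fun k _ => sum_nonneg fun i _ => div_nonneg (sq_nonneg _) (hx k i).le
  rcases le_or_gt M 0 with hM0 | hM0
  · exact (mul_nonpos_of_nonpos_of_nonneg (one_div_nonpos.2 hM0) (sq_nonneg _)).trans hw
  rw [one_div_mul_eq_div, div_le_iff₀ hM0]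
  have hcs : (∑ k, ∑ i, |m k i|) ^ 2 ≤ (∑ k, ∑ i, |x k i|) * ∑ k, ∑ i, m k i ^ 2 / x k i := by
    simp only [sum_sigma']
    refine sum_sq_le_sum_mul_sum_of_sq_le_mul _ (fun p _ => abs_nonneg _)
      (fun p _ => div_nonneg (sq_nonneg _) (hx p.1 p.2).le) fun p _ => le_of_eq ?_
    rw [abs_of_pos (hx p.1 p.2), sq_abs]
    field_simp [(hx p.1 p.2).ne']
  calc (∑ k, ∑ i, |m k i|) ^ 2
      ≤ (∑ k, ∑ i, |x k i|) * ∑ k, ∑ i, m k i ^ 2 / x k i := hcs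
    _ ≤ M * ∑ k, ∑ i, m k i ^ 2 / x k i := mul_le_mul_of_nonneg_right hM hw
    _ = (∑ k, ∑ i, m k i ^ 2 / x k i) * M := mul_comm _ _

end Chain

/-- **Strong convexity of the dilatable global entropy on chains of scaled extensions of
simplexes** (Theorem 4). With the coefficients chosen recursively as `α_n = 1`,
`α_k = 1 + ‖∑_{p>k} α_p·‖a_p‖₀·a_{p,k}‖_∞`, the dilatable global entropy `φ̃` satisfies,
at every point `x` of `(relint Δ^{s_1}) ◁^{h_1} ⋯ ◁^{h_{n−1}} (relint Δ^{s_n})` and in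
every direction `m`, `m^⊤ ∇²φ̃(x) m ≥ ‖m‖₂²` and `m^⊤ ∇²φ̃(x) m ≥ (1/M_X)·‖m‖₁²`, where
`M_X = max_{x∈X} ‖x‖₁`. -/
theorem simplex_chain_dge_strong_convexity
    {n : ℕ} (hn : 0 < n)
    (s : Fin n → ℕ) (hs : ∀ k, 0 < s k)
    (a : (k : Fin n) → (q : Fin n) → Fin (s q) → ℝ)
    (ha : ∀ k q, q < k → ∀ i, a k q i ∈ Set.Icc (0 : ℝ) 1)
    (H : Fin n → ((k : Fin n) → Fin (s k) → ℝ) → ℝ)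
    (hHdef : ∀ k x, H k x = ∑ q ∈ Finset.univ.filter (fun q => q < k), ∑ i, a k q i * x q i)
    (memX memRelX : ((k : Fin n) → Fin (s k) → ℝ) → Prop)
    (hmemX : ∀ x, memX x ↔ ∀ k : Fin n,
        (k.val = 0 → x k ∈ stdSimplex ℝ (Fin (s k))) ∧
        (k.val ≠ 0 → ∃ v ∈ stdSimplex ℝ (Fin (s k)), x k = H k x • v))
    (hmemRelX : ∀ x, memRelX x ↔ ∀ k : Fin n,
        (k.val = 0 → x k ∈ intrinsicInterior ℝ (stdSimplex ℝ (Fin (s k)))) ∧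
        (k.val ≠ 0 → ∃ v ∈ intrinsicInterior ℝ (stdSimplex ℝ (Fin (s k))), x k = H k x • v))
    (hH01 : ∀ x, memX x → ∀ k : Fin n, k.val ≠ 0 → 0 ≤ H k x ∧ H k x ≤ 1)
    (hHpos : ∀ x, memRelX x → ∀ k : Fin n, k.val ≠ 0 → 0 < H k x)
    (α : Fin n → ℝ)
    (hαrec : ∀ k : Fin n, α k = 1 +
        (Finset.univ.sup' (Finset.univ_nonempty_iff.mpr (Fin.pos_iff_nonempty.mp (hs k)))
          (fun i : Fin (s k) =>
            |∑ p ∈ Finset.univ.filter (fun p => k < p),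
              α p * ((∑ q ∈ Finset.univ.filter (fun q => q < p),
                  (Finset.univ.filter (fun i : Fin (s q) => a p q i ≠ 0)).card : ℕ) : ℝ)
                * a p k i|)))
    (M : ℝ)
    (hM : IsGreatest ((fun x : (k : Fin n) → Fin (s k) → ℝ => ∑ k, ∑ i, |x k i|)
        '' {x | memX x}) M)
    (φ : ((k : Fin n) → Fin (s k) → ℝ) → ℝ)
    (hφ : φ = fun x =>
      (∑ k, α k * ∑ i, x k i * Real.log (x k i))
      - (∑ k ∈ Finset.univ.filter (fun k : Fin n => k.val ≠ 0),
          α k * (H k x * Real.log (H k x)))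
      + α ⟨0, hn⟩ * Real.log ((s ⟨0, hn⟩ : ℝ))
      + ∑ k ∈ Finset.univ.filter (fun k : Fin n => k.val ≠ 0),
          α k * (H k x * Real.log ((s k : ℝ)))) :
    ∀ x, memRelX x → ∀ m : (k : Fin n) → Fin (s k) → ℝ,
      iteratedFDeriv ℝ 2 φ x ![m, m] ≥ ∑ k, ∑ i, (m k i) ^ 2 ∧
      iteratedFDeriv ℝ 2 φ x ![m, m] ≥ (1 / M) * (∑ k, ∑ i, |m k i|) ^ 2 := by
  intro x hx m
  have hxRel : MemScaledChain (fun k => intrinsicInterior ℝ (stdSimplex ℝ (Fin (s k))))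
      (fun k => H k x) x := (hmemRelX x).1 hx
  have hxX : memX x := (hmemX x).2 (hxRel.mono fun k => intrinsicInterior_subset)
  have hxpos := hxRel.pos (fun k v hv => pos_of_mem_intrinsicInterior_stdSimplex hv)
    (hHpos x hx)
  have hxSimplex : MemScaledChain (fun k => stdSimplex ℝ (Fin (s k))) (fun k => H k x) x :=
    (hmemX x).1 hxX
  have hxle := hxSimplex.le_one (fun k v hv i => (mem_Icc_of_mem_stdSimplex hv i).2)
    (hH01 x hxX)
  have hbound : ∀ q i,
      |∑ p ∈ univ.filter (q < ·), α p * coeffL0Norm a p * a p q i| ≤ α q - 1 := by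
    intro q i
    rw [hαrec q, add_sub_cancel_left]
    exact (le_sup'_iff _).2 ⟨i, mem_univ i, le_rfl⟩
  have hα0 : ∀ k, 0 ≤ α k := fun k => by
    linarith [(abs_nonneg _).trans (hbound k ⟨0, hs k⟩)]
  have ha0 : ∀ k q, q < k → ∀ i, 0 ≤ a k q i := fun k q hqk i => (ha k q hqk i).1
  have hHa : H = fun k y => chainScale a k y :=
    funext₂ fun k y => by rw [hHdef, chainScale_apply]
  subst hHa hφ
  have hQ := sum_sq_div_le_iteratedFDeriv_two_dilatableEntropy hn hα0 ha0
    (sum_mul_le_of_abs_sum_mul_coeffL0Norm_le hα0 ha0 hbound) hxpos (hHpos x hx) m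
  exact ⟨(sum_sq_le_sum_sq_div hxpos hxle m).trans hQ,
    (one_div_mul_sq_sum_abs_le hxpos (hM.2 ⟨x, hxX, rfl⟩) m).trans hQ⟩
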